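/- Let TA = (L, L₀, ∅, Σ, CX, I, E) be a timed automaton with an empty set of urgent locations, and define f on states by f((l,ν)) = (l,ν) if ν ⊨ I(l) and f((l,ν)) = (l_u, ν) otherwise. For every δ ∈ ℝ≥0 and all states (l,ν), (l',ν'): (l,ν) →δ (l',ν') is a delay transition in TS'(TA) if and only if f((l,ν)) →δ f((l',ν')) is a delay transition in TS(INV(TA)). -/

import Mathlib

/-!
Framework for timed automata.  Clock valuations assign non-negative reals to
clocks.  Guards and location invariants are represented semantically, as
predicates on clock valuations.
-/

/-- Clock valuations: each clock gets a non-negative real. -/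
abbrev Val (C : Type) := C → NNReal

/-- The valuation `ν₀` assigning `0` to every clock. -/
def zeroVal {C : Type} : Val C := fun _ => 0

open Classical in
/-- `ν[λ := 0]`: reset the clocks in `lam` to zero. -/
noncomputable def resetVal {C : Type} (ν : Val C) (lam : Set C) : Val C :=
  fun x => if x ∈ lam then 0 else ν x

/-- `ν + δ`: advance every clock by `δ`. -/
def shift {C : Type} (ν : Val C) (δ : NNReal) : Val C := fun x => ν x + δ

/-- A timed automaton `TA = (L, L₀, L_u, Σ, CX, I, E)` with location type `L`,
action alphabet `A` and clock type `C`:  a set of initial locations (nonempty),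
a set of urgent locations, an invariant map, and a set of edges
`(l, a, φ, λ, l')` consisting of source, action, guard, reset set and target. -/
structure TA (L A C : Type) where
  init : Set L
  init_nonempty : init.Nonempty
  urgent : Set L
  inv : L → Val C → Prop
  edges : Set (L × A × (Val C → Prop) × Set C × L)

/-- States of the associated transition systems: location/valuation pairs. -/
abbrev State (L C : Type) := L × Val C

/-- Initial states: initial locations paired with the zero valuation. -/
def TA.initStates {L A C : Type} (T : TA L A C) : Set (State L C) :=
  {p | p.1 ∈ T.init ∧ p.2 = zeroVal}

/-- Baseline semantics `TS(TA)`.  Labels are `Sum.inl a` for actions `a ∈ Σ`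
and `Sum.inr δ` for delays `δ ∈ ℝ≥0`.  Action transitions require the target
invariant to hold; delay transitions require the source location not to be
urgent and the invariant to hold throughout the delay. -/
def TS {L A C : Type} (T : TA L A C) :
    State L C → (A ⊕ NNReal) → State L C → Prop := fun p α q =>
  match α with
  | Sum.inl a => ∃ φ lam, (p.1, a, φ, lam, q.1) ∈ T.edges ∧ φ p.2 ∧
      q.2 = resetVal p.2 lam ∧ T.inv q.1 q.2
  | Sum.inr δ => p.1 ∉ T.urgent ∧ q.1 = p.1 ∧ q.2 = shift p.2 δ ∧
      ∀ k ≤ δ, T.inv p.1 (shift p.2 k)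

/-- Unsatisfied-invariants semantics `TS'(TA)`: like `TS(TA)` except action
transitions do not require the target invariant to hold. -/
def TS' {L A C : Type} (T : TA L A C) :
    State L C → (A ⊕ NNReal) → State L C → Prop := fun p α q =>
  match α with
  | Sum.inl a => ∃ φ lam, (p.1, a, φ, lam, q.1) ∈ T.edges ∧ φ p.2 ∧
      q.2 = resetVal p.2 lam
  | Sum.inr δ => p.1 ∉ T.urgent ∧ q.1 = p.1 ∧ q.2 = shift p.2 δ ∧
      ∀ k ≤ δ, T.inv p.1 (shift p.2 k)

/-- Reachable states: smallest set containing the initial states and closed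
under the transition relation. -/
inductive Reachable {S Λ : Type} (init : Set S) (tr : S → Λ → S → Prop) : S → Prop
  | base {s : S} : s ∈ init → Reachable init tr s
  | step {s : S} {α : Λ} {s' : S} :
      Reachable init tr s → tr s α s' → Reachable init tr s'

/-- The construction `INV(TA)` (for `TA` with no urgent locations).  Locations
are `L ⊕ L`: `Sum.inl l` is the original location `l`, `Sum.inr l` is its fresh
urgent copy `l_u`.  For each original edge `(l, a, φ, λ, l')`, four edges are
introduced, with guards `φ₁ = φ ∧ resetPred(I(l'), λ)` (semantically:
`φ ν ∧ I(l')(ν[λ:=0])`) and `φ₂ = φ ∧ ¬resetPred(I(l'), λ)`. -/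
noncomputable def INV {L A C : Type} (T : TA L A C) : TA (L ⊕ L) A C where
  init := Sum.inl '' {l | l ∈ T.init ∧ T.inv l zeroVal} ∪
          Sum.inr '' {l | l ∈ T.init ∧ ¬ T.inv l zeroVal}
  init_nonempty := by
    obtain ⟨l, hl⟩ := T.init_nonempty
    by_cases h : T.inv l zeroVal
    · exact ⟨Sum.inl l, Set.mem_union_left _ (Set.mem_image_of_mem _ ⟨hl, h⟩)⟩
    · exact ⟨Sum.inr l, Set.mem_union_right _ (Set.mem_image_of_mem _ ⟨hl, h⟩)⟩
  urgent := Set.range Sum.inr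
  inv := fun l' ν =>
    match l' with
    | Sum.inl l => T.inv l ν
    | Sum.inr _ => True
  edges := { e | ∃ l a φ lam l', (l, a, φ, lam, l') ∈ T.edges ∧
      (e = (Sum.inl l, a, fun ν => φ ν ∧ T.inv l' (resetVal ν lam), lam, Sum.inl l') ∨
       e = (Sum.inl l, a, fun ν => φ ν ∧ ¬ T.inv l' (resetVal ν lam), lam, Sum.inr l') ∨
       e = (Sum.inr l, a, fun ν => φ ν ∧ T.inv l' (resetVal ν lam), lam, Sum.inl l') ∨
       e = (Sum.inr l, a, fun ν => φ ν ∧ ¬ T.inv l' (resetVal ν lam), lam, Sum.inr l')) }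

open Classical in
/-- The map `f` on states: `f((l,ν)) = (l,ν)` if `ν ⊨ I(l)`, and
`f((l,ν)) = (l_u, ν)` otherwise. -/
noncomputable def fINV {L A C : Type} (T : TA L A C) :
    State L C → State (L ⊕ L) C := fun p =>
  if T.inv p.1 p.2 then (Sum.inl p.1, p.2) else (Sum.inr p.1, p.2)

/-!
A delay is only possible from a state satisfying its invariant (take `k = 0`), and it
ends in a state satisfying it (take `k = δ`), so `f` sends both ends of a delay of
`TS'(TA)` to original locations, where `INV(TA)` has the same invariants. Conversely
`INV(TA)` cannot delay in an urgent copy `l_u`, so every delay there starts and ends in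
original locations.
-/

@[simp]
lemma shift_zero {C : Type} (ν : Val C) : shift ν 0 = ν :=
  funext fun _ => add_zero _

section TimedAutomaton

variable {L A C : Type} {T : TA L A C}

lemma fINV_of_inv {l : L} {ν : Val C} (h : T.inv l ν) : fINV T (l, ν) = (Sum.inl l, ν) :=
  if_pos h

lemma fINV_of_not_inv {l : L} {ν : Val C} (h : ¬T.inv l ν) :
    fINV T (l, ν) = (Sum.inr l, ν) :=
  if_neg h

lemma fINV_eq_inl_iff {p : State L C} {l : L} {ν : Val C} :
    fINV T p = (Sum.inl l, ν) ↔ p = (l, ν) ∧ T.inv l ν := by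
  obtain ⟨l', ν'⟩ := p
  by_cases h : T.inv l' ν'
  · rw [fINV_of_inv h]
    constructor
    · rintro ⟨⟩; exact ⟨rfl, h⟩
    · rintro ⟨⟨⟩, -⟩; rfl
  · rw [fINV_of_not_inv h]
    exact iff_of_false (by simp) (by rintro ⟨⟨⟩, h'⟩; exact h h')

lemma TS'_delay_iff {l : L} (hl : l ∉ T.urgent) {ν : Val C} {δ : NNReal} {q : State L C} :
    TS' T (l, ν) (Sum.inr δ) q ↔ q = (l, shift ν δ) ∧ ∀ k ≤ δ, T.inv l (shift ν k) := by
  simp only [TS', Prod.ext_iff, hl, not_false_eq_true, true_and, and_assoc]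

lemma TS_INV_delay_inl_iff {l : L} {ν : Val C} {δ : NNReal} {q : State (L ⊕ L) C} :
    TS (INV T) (Sum.inl l, ν) (Sum.inr δ) q ↔
      q = (Sum.inl l, shift ν δ) ∧ ∀ k ≤ δ, T.inv l (shift ν k) := by
  simp only [TS, INV, Prod.ext_iff, Set.mem_range, reduceCtorEq, exists_false,
    not_false_eq_true, true_and, and_assoc]

lemma TS_INV_not_delay_inr {l : L} {ν : Val C} {δ : NNReal} {q : State (L ⊕ L) C} :
    ¬TS (INV T) (Sum.inr l, ν) (Sum.inr δ) q :=
  fun h => h.1 ⟨l, rfl⟩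

end TimedAutomaton

theorem statement_4_general {L A C : Type}
    (T : TA L A C) (hu : T.urgent = ∅) :
    ∀ (δ : NNReal) (l l' : L) (ν ν' : Val C),
      TS' T (l, ν) (Sum.inr δ) (l', ν') ↔
        TS (INV T) (fINV T (l, ν)) (Sum.inr δ) (fINV T (l', ν')) := by
  intro δ l l' ν ν'
  rw [TS'_delay_iff (hu ▸ Set.notMem_empty l)]
  by_cases hν : T.inv l ν
  · rw [fINV_of_inv hν, TS_INV_delay_inl_iff, fINV_eq_inl_iff]
    constructor
    · rintro ⟨hq, hinv⟩
      exact ⟨⟨hq, hinv δ le_rfl⟩, hinv⟩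
    · rintro ⟨⟨hq, -⟩, hinv⟩
      exact ⟨hq, hinv⟩
  · rw [fINV_of_not_inv hν]
    exact iff_of_false (fun h => hν (by simpa using h.2 0 zero_le)) TS_INV_not_delay_inr

/-- for every `δ ∈ ℝ≥0` and all states, `(l,ν) →δ (l',ν')` is a
delay transition in `TS'(TA)` iff `f((l,ν)) →δ f((l',ν'))` is a delay
transition in `TS(INV(TA))`. -/
theorem statement_4 {L A C : Type} [Fintype L] [Fintype A] [Fintype C] [Nonempty C]
    (T : TA L A C) (hu : T.urgent = ∅) :
    ∀ (δ : NNReal) (l l' : L) (ν ν' : Val C),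
      TS' T (l, ν) (Sum.inr δ) (l', ν') ↔
        TS (INV T) (fINV T (l, ν)) (Sum.inr δ) (fINV T (l', ν')) :=
  statement_4_general T hu
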